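/- arXiv:1503.00351 — 3 statements merged into one kernel-verified Lean document; each statement's English description precedes it below -/
import Mathlib

section
/- Let G be an infinite gap of a sibling σ_d-invariant geolamination that is periodic of period k, and suppose the basis G' = G ∩ S¹ is countable (a caterpillar gap). Then the degree of σ_d^k restricted to the boundary of G is one, and G' contains a σ_d^k-periodic point. -/
open Function Set

noncomputable section

/-- The circle `ℝ/ℤ`. -/
abbrev S1 := AddCircle (1 : ℝ)

/-- The angle-`d`-tupling map `σ_d : t ↦ d·t (mod 1)`. -/
def sig (d : ℕ) (t : S1) : S1 := d • t

/-- The point of the unit circle in `ℂ` corresponding to `t ∈ ℝ/ℤ`. -/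
def pt (t : S1) : ℂ := (AddCircle.toCircle t : ℂ)

/-- The chord of the closed unit disk joining two circle points. -/
def chord (a b : S1) : Set ℂ := segment ℝ (pt a) (pt b)

/-- Two chords cross (are linked) if they meet in the open unit disk. -/
def Crosses (c₁ c₂ : Set ℂ) : Prop := ∃ z, z ∈ c₁ ∧ z ∈ c₂ ∧ ‖z‖ < 1

/-- A sibling `σ_d`-invariant geolamination: a symmetric family of (possibly degenerate)
pairwise unlinked chords, containing all degenerate chords, closed under taking images,
having preimages of leaves, and having `d` pairwise disjoint sibling leaves for every leaf
with non-degenerate image. -/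
structure Geolam (d : ℕ) where
  leaves : Set (S1 × S1)
  symm : ∀ p ∈ leaves, (p.2, p.1) ∈ leaves
  degen : ∀ t : S1, (t, t) ∈ leaves
  unlinked : ∀ p ∈ leaves, ∀ q ∈ leaves,
    chord p.1 p.2 = chord q.1 q.2 ∨ ¬ Crosses (chord p.1 p.2) (chord q.1 q.2)
  fwd : ∀ p ∈ leaves, (sig d p.1, sig d p.2) ∈ leaves
  bwd : ∀ p ∈ leaves, ∃ q ∈ leaves, (sig d q.1, sig d q.2) = p
  sibling : ∀ p ∈ leaves, sig d p.1 ≠ sig d p.2 →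
    ∃ f : Fin d → S1 × S1, (∃ i, f i = p) ∧ (∀ i, f i ∈ leaves) ∧
      (∀ i, sig d (f i).1 = sig d p.1 ∧ sig d (f i).2 = sig d p.2) ∧
      (∀ i j, i ≠ j → Disjoint (chord (f i).1 (f i).2) (chord (f j).1 (f j).2))

/-- The solid of a geolamination: the union of all its leaves. -/
def solid (d : ℕ) (L : Geolam d) : Set ℂ := ⋃ p ∈ L.leaves, chord p.1 p.2

/-- A gap of a geolamination: the closure of a connected component of the open unit disk
minus the solid. -/
def IsGap (d : ℕ) (L : Geolam d) (G : Set ℂ) : Prop :=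
  ∃ z ∈ Metric.ball (0 : ℂ) 1 \ solid d L,
    G = closure (connectedComponentIn (Metric.ball (0 : ℂ) 1 \ solid d L) z)

/-- The basis of a gap: circle points lying in it. -/
def gapBasis (G : Set ℂ) : Set S1 := {t : S1 | pt t ∈ G}

/-- `f` has degree `m` on the (boundary extension over the) set `A`: every value is attained
at least `m` times on `A`, and some value exactly `m` times. -/
def DegreeOn (f : S1 → S1) (A : Set S1) (m : ℕ) : Prop :=
  (∀ y ∈ f '' A, m ≤ {x ∈ A | f x = y}.ncard) ∧ ∃ y ∈ f '' A, {x ∈ A | f x = y}.ncard = m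


/-!
Only the topology of the basis `A = G ∩ 𝕊¹` matters: `A` is closed, countable and invariant
under the covering map `f = σ_d^k = (d^k • ·)`, and a countable closed set has isolated points
since it contains no nonempty perfect set. A minimal closed `f`-invariant subset of `A` is the
orbit closure of each of its points; at an isolated point this forces the orbit to return, which
gives a periodic point. If every point of `A` had two preimages in `A`, take a minimal closed
subset `M` with the same property. Distinct preimages of a point under `f` stay a definite
distance apart, so the property passes to the accumulation points of `M`; by minimality `M` is
perfect, which is impossible. Hence some point of `A` has a single preimage in `A`: the degree
of `f` on `Bd(G)` is one.
-/

open Filter Topology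

section CountableClosedSets

variable {X : Type*}

theorem IsChain.directedOn_supset {c : Set (Set X)} (h : IsChain (· ⊆ ·) c) :
    DirectedOn (· ⊇ ·) c :=
  @IsChain.directedOn _ (· ⊇ ·) c _ h.symm

theorem exists_minimal_closed_subset [TopologicalSpace X] [CompactSpace X]
    {P : Set X → Prop} {A : Set X} (hA : A.Nonempty) (hAc : IsClosed A) (hPA : P A)
    (hP : ∀ c : Set (Set X), c.Nonempty → IsChain (· ⊆ ·) c →
      (∀ B ∈ c, IsClosed B ∧ P B) → P (⋂₀ c)) :
    ∃ M ⊆ A, Minimal (fun B => B.Nonempty ∧ IsClosed B ∧ P B) M := by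
  refine zorn_superset_nonempty {B | B.Nonempty ∧ IsClosed B ∧ P B}
    (fun c hcS hchain hc => ?_) A ⟨hA, hAc, hPA⟩
  have : Nonempty c := hc.to_subtype
  refine ⟨⋂₀ c, ⟨?_, isClosed_sInter fun B hB => (hcS hB).2.1,
    hP c hc hchain fun B hB => (hcS hB).2⟩, fun B hB => sInter_subset_of_mem hB⟩
  exact IsCompact.nonempty_sInter_of_directed_nonempty_isCompact_isClosed
    hchain.directedOn_supset (fun B hB => (hcS hB).1) (fun B hB => (hcS hB).2.1.isCompact)
    (fun B hB => (hcS hB).2.1)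

theorem IsClosed.exists_notMem_derivedSet_of_countable [MetricSpace X] [CompleteSpace X]
    {M : Set X} (hM : IsClosed M) (hct : M.Countable) (hne : M.Nonempty) :
    ∃ x ∈ M, x ∉ derivedSet M := by
  by_contra! h
  obtain ⟨F, hFM, -, hF⟩ :=
    (Perfect.mk hM (preperfect_iff_subset_derivedSet.mpr h)).exists_nat_bool_injection hne
  have : Uncountable (ℕ → Bool) := by
    rw [← not_countable_iff, ← Cardinal.mk_le_aleph0_iff, not_le]
    simpa using Cardinal.aleph0_lt_continuum
  have hcF := (hct.mono hFM).preimage hF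
  rw [preimage_range] at hcF
  exact not_countable_univ hcF

theorem exists_isPeriodicPt_of_countable [MetricSpace X] [CompactSpace X] {f : X → X}
    (hf : Continuous f) {A : Set X} (hAc : IsClosed A) (hct : A.Countable) (hne : A.Nonempty)
    (hA : MapsTo f A A) :
    ∃ x ∈ A, ∃ m, 0 < m ∧ IsPeriodicPt f m x := by
  obtain ⟨M, hMA, ⟨hMne, hMc, hMf⟩, hMmin⟩ :=
    exists_minimal_closed_subset (P := fun B => MapsTo f B B) hne hAc hA
      fun c _ _ hc x hx B hB => (hc B hB).2 (hx B hB)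
  obtain ⟨x, hxM, hx⟩ := hMc.exists_notMem_derivedSet_of_countable (hct.mono hMA) hMne
  set O := range fun m : ℕ => f^[m + 1] x
  have hOM : O ⊆ M := by
    rintro _ ⟨m, rfl⟩
    exact hMf.iterate (m + 1) hxM
  have hOf : MapsTo f O O := by
    rintro _ ⟨m, rfl⟩
    exact ⟨m + 1, iterate_succ_apply' f (m + 1) x⟩
  have hMO : M ⊆ closure O :=
    hMmin ⟨⟨f x, subset_closure ⟨0, rfl⟩⟩, isClosed_closure, hOf.closure hf⟩
      (hMc.closure_subset_iff.mpr hOM)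
  have hxO : x ∈ O := by
    have hxO := hMO hxM
    rw [closure_eq_self_union_derivedSet] at hxO
    exact hxO.resolve_right fun h => hx (derivedSet_mono _ _ hOM h)
  obtain ⟨m, hm⟩ := hxO
  exact ⟨x, hMA hxM, m + 1, m.succ_pos, hm⟩

def IsDoublyCovered (f : X → X) (B : Set X) : Prop :=
  ∀ y ∈ B, ∃ a ∈ B, ∃ b ∈ B, a ≠ b ∧ f a = y ∧ f b = y

theorem IsDoublyCovered.infinite {f : X → X} {B : Set X} (h : IsDoublyCovered f B)
    (hne : B.Nonempty) : B.Infinite := by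
  intro hB
  set B₀ := B ∩ f ⁻¹' B
  have himage : f '' B₀ = B := by
    refine Subset.antisymm (image_subset_iff.mpr inter_subset_right) fun y hy => ?_
    obtain ⟨a, ha, -, -, -, hfa, -⟩ := h y hy
    exact ⟨a, ⟨ha, by rwa [mem_preimage, hfa]⟩, hfa⟩
  have hinj : InjOn f B₀ := by
    refine injOn_of_ncard_image_eq (le_antisymm (ncard_image_le (hB.subset inter_subset_left)) ?_)
      (hB.subset inter_subset_left)
    rw [himage]
    exact ncard_le_ncard inter_subset_left hB
  obtain ⟨y, hy⟩ := hne
  obtain ⟨a, ha, b, hb, hab, hfa, hfb⟩ := h y hy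
  exact hab (hinj ⟨ha, by rwa [mem_preimage, hfa]⟩ ⟨hb, by rwa [mem_preimage, hfb]⟩
    (hfa.trans hfb.symm))

section Hausdorff

variable [TopologicalSpace X] [T2Space X] {f : X → X}

theorem IsDoublyCovered.sInter [CompactSpace X] (hf : Continuous f)
    (hsep : IsClosed {p : X × X | p.1 ≠ p.2 ∧ f p.1 = f p.2}) {c : Set (Set X)}
    (hc : c.Nonempty) (hchain : IsChain (· ⊆ ·) c) (h : ∀ B ∈ c, IsClosed B ∧ IsDoublyCovered f B) :
    IsDoublyCovered f (⋂₀ c) := by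
  intro y hy
  let T : Set X → Set (X × X) := fun B =>
    B ×ˢ B ∩ {p | p.1 ≠ p.2 ∧ f p.1 = f p.2} ∩ (f ∘ Prod.fst) ⁻¹' {y}
  have hTc (B : c) : IsClosed (T B) :=
    (((h B B.2).1.prod (h B B.2).1).inter hsep).inter
      (isClosed_singleton.preimage (hf.comp continuous_fst))
  have hTne (B : c) : (T B).Nonempty := by
    obtain ⟨a, ha, b, hb, hab, hfa, hfb⟩ := (h B B.2).2 y (hy B B.2)
    exact ⟨(a, b), ⟨⟨ha, hb⟩, hab, hfa.trans hfb.symm⟩, hfa⟩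
  have hTdir : Directed (· ⊇ ·) (T ∘ Subtype.val : c → Set (X × X)) :=
    Directed.mono_comp _ (fun B B' hB => inter_subset_inter_left _
      (inter_subset_inter_left _ (prod_mono hB hB))) hchain.directedOn_supset.directed_val
  have : Nonempty c := hc.to_subtype
  obtain ⟨p, hp⟩ := IsCompact.nonempty_iInter_of_directed_nonempty_isCompact_isClosed _ hTdir
    hTne (fun B => (hTc B).isCompact) hTc
  rw [mem_iInter] at hp
  obtain ⟨B₀, hB₀⟩ := hc
  obtain ⟨⟨-, hne, hfeq⟩, hfy⟩ := hp ⟨B₀, hB₀⟩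
  exact ⟨p.1, fun B hB => (hp ⟨B, hB⟩).1.1.1, p.2, fun B hB => (hp ⟨B, hB⟩).1.1.2, hne, hfy,
    hfeq ▸ hfy⟩

theorem apply_eq_and_mem_derivedSet_of_clusterPt (hf : Continuous f) {B : Set X} {x y : X}
    {u : X → X} (hu : ∀ z ∈ B, u z ∈ B ∧ f (u z) = z)
    (hx : ClusterPt x (map u (𝓝[≠] y ⊓ 𝓟 B))) :
    f x = y ∧ x ∈ derivedSet B := by
  have hB : ∀ᶠ z in 𝓝[≠] y ⊓ 𝓟 B, z ∈ B := mem_inf_of_right (mem_principal_self B)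
  have hfx : f x = y := by
    refine eq_of_nhds_neBot (hx.map hf.continuousAt ?_)
    rw [tendsto_map'_iff]
    refine Tendsto.congr' ?_ (inf_le_left.trans nhdsWithin_le_nhds : 𝓝[≠] y ⊓ 𝓟 B ≤ 𝓝 y)
    filter_upwards [hB] with z hz using ((hu z hz).2).symm
  refine ⟨hfx, accPt_principal_iff_clusterPt.mpr (hx.mono ?_)⟩
  rw [le_principal_iff, mem_map]
  filter_upwards [hB, mem_inf_of_left self_mem_nhdsWithin] with z hz hzy
  exact ⟨(hu z hz).1, fun hzx => hzy ((hu z hz).2.symm.trans ((congrArg f hzx).trans hfx))⟩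

theorem IsDoublyCovered.inter_derivedSet [CompactSpace X] (hf : Continuous f)
    (hsep : IsClosed {p : X × X | p.1 ≠ p.2 ∧ f p.1 = f p.2}) {B : Set X} (hB : IsClosed B)
    (h : IsDoublyCovered f B) : IsDoublyCovered f (B ∩ derivedSet B) := by
  choose! a ha b hb hab hfa hfb using h
  rintro y ⟨-, hy⟩
  have : (𝓝[≠] y ⊓ 𝓟 B).NeBot := hy
  obtain ⟨q, ⟨⟨hq₁, hq₂⟩, hqne, -⟩, hq⟩ := ((hB.prod hB).inter hsep).isCompact.exists_clusterPt
    (f := map (fun z => (a z, b z)) (𝓝[≠] y ⊓ 𝓟 B)) <| by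
      rw [le_principal_iff, mem_map]
      filter_upwards [mem_inf_of_right (mem_principal_self B)] with z hz
      exact ⟨⟨ha z hz, hb z hz⟩, hab z hz, (hfa z hz).trans (hfb z hz).symm⟩
  obtain ⟨hfq₁, hq₁'⟩ := apply_eq_and_mem_derivedSet_of_clusterPt hf
    (fun z hz => ⟨ha z hz, hfa z hz⟩) (hq.map continuous_fst.continuousAt tendsto_map)
  obtain ⟨hfq₂, hq₂'⟩ := apply_eq_and_mem_derivedSet_of_clusterPt hf
    (fun z hz => ⟨hb z hz, hfb z hz⟩) (hq.map continuous_snd.continuousAt tendsto_map)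
  exact ⟨q.1, ⟨hq₁, hq₁'⟩, q.2, ⟨hq₂, hq₂'⟩, hqne, hfq₁, hfq₂⟩

end Hausdorff

theorem IsDoublyCovered.eq_empty_of_countable [MetricSpace X] [CompactSpace X] {f : X → X}
    (hf : Continuous f) (hsep : IsClosed {p : X × X | p.1 ≠ p.2 ∧ f p.1 = f p.2})
    {A : Set X} (hAc : IsClosed A) (hct : A.Countable) (h : IsDoublyCovered f A) : A = ∅ := by
  rw [← not_nonempty_iff_eq_empty]
  intro hne
  obtain ⟨M, hMA, ⟨hMne, hMc, hM⟩, hMmin⟩ :=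
    exists_minimal_closed_subset (P := IsDoublyCovered f) hne hAc h
      fun c hc hchain hB => .sInter hf hsep hc hchain hB
  obtain ⟨x, hxM, hx⟩ := hMc.exists_notMem_derivedSet_of_countable (hct.mono hMA) hMne
  obtain ⟨z, hzM, hz⟩ :=
    (hM.infinite hMne).exists_accPt_of_subset_isCompact hMc.isCompact subset_rfl
  have hMD : M ⊆ M ∩ derivedSet M := hMmin ⟨⟨z, hzM, hz⟩, hMc.inter (isClosed_derivedSet M),
    hM.inter_derivedSet hf hsep hMc⟩ inter_subset_left
  exact hx (hMD hxM).2

theorem exists_fiber_eq_singleton_of_countable [MetricSpace X] [CompactSpace X]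
    {f : X → X} (hf : Continuous f) (hsep : IsClosed {p : X × X | p.1 ≠ p.2 ∧ f p.1 = f p.2})
    {A : Set X} (hAc : IsClosed A) (hct : A.Countable) (hne : A.Nonempty) (hA : SurjOn f A A) :
    ∃ y ∈ A, ∃ x, {x ∈ A | f x = y} = {x} := by
  by_contra! hfib
  refine hne.ne_empty (IsDoublyCovered.eq_empty_of_countable hf hsep hAc hct fun y hy => ?_)
  obtain ⟨a, ha, rfl⟩ := hA hy
  have hfa : a ∈ {x ∈ A | f x = f a} := ⟨ha, rfl⟩
  obtain ⟨b, ⟨hb, hfb⟩, hba⟩ :=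
    exists_of_ssubset ((singleton_subset_iff.2 hfa).ssubset_of_ne (hfib _ hy a).symm)
  exact ⟨b, hb, a, ha, hba, hfb, rfl⟩

end CountableClosedSets

namespace AddCircle

variable {p : ℝ} {n : ℕ}

theorem finite_setOf_nsmul_eq (hn : 0 < n) (y : AddCircle p) :
    {x : AddCircle p | n • x = y}.Finite := by
  rcases eq_empty_or_nonempty {x : AddCircle p | n • x = y} with h | ⟨x₀, hx₀ : n • x₀ = y⟩
  · rw [h]
    exact finite_empty
  refine ((finite_torsion p hn).preimage (sub_left_injective (b := x₀)).injOn).subset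
    fun x (hx : n • x = y) => ?_
  show n • (x - x₀) = 0
  rw [nsmul_sub, hx, hx₀, sub_self]

theorem isClosed_setOf_ne_nsmul_eq (hn : 0 < n) :
    IsClosed {q : AddCircle p × AddCircle p | q.1 ≠ q.2 ∧ n • q.1 = n • q.2} := by
  have : {q : AddCircle p × AddCircle p | q.1 ≠ q.2 ∧ n • q.1 = n • q.2} =
      (fun q => q.1 - q.2) ⁻¹' ({u | n • u = 0} \ {0}) := by
    ext q
    simp [sub_eq_zero, nsmul_sub, and_comm]
  rw [this]
  exact (finite_torsion p hn).sdiff.isClosed.preimage (continuous_fst.sub continuous_snd)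

end AddCircle

theorem degreeOn_nsmul_eq_one {n : ℕ} (hn : 0 < n) {A : Set S1} (hAc : IsClosed A)
    (hct : A.Countable) (hne : A.Nonempty) (hA : (n • ·) '' A = A) :
    DegreeOn (n • ·) A 1 := by
  refine ⟨?_, ?_⟩
  · rintro _ ⟨x, hx, rfl⟩
    exact (ncard_pos ((AddCircle.finite_setOf_nsmul_eq hn _).subset fun z hz => hz.2)).2
      ⟨x, hx, rfl⟩
  · obtain ⟨y, hy, x, hx⟩ := exists_fiber_eq_singleton_of_countable (continuous_nsmul n)
      (AddCircle.isClosed_setOf_ne_nsmul_eq hn) hAc hct hne hA.symm.subset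
    exact ⟨y, hA.symm ▸ hy, by rw [hx, ncard_singleton]⟩

theorem IsGap.isClosed_gapBasis {d : ℕ} {L : Geolam d} {G : Set ℂ} (hG : IsGap d L G) :
    IsClosed (gapBasis G) := by
  obtain ⟨z, -, rfl⟩ := hG
  exact isClosed_closure.preimage (continuous_subtype_val.comp AddCircle.continuous_toCircle)

theorem stmt3_general (d k : ℕ) (hd : 2 ≤ d) (L : Geolam d) (G : Set ℂ)
    (hG : IsGap d L G)
    (hcnt : (gapBasis G).Countable) (hinf : (gapBasis G).Infinite)
    (hinv : (sig d)^[k] '' gapBasis G = gapBasis G) :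
    DegreeOn ((sig d)^[k]) (gapBasis G) 1 ∧
    ∃ x ∈ gapBasis G, ∃ m, 1 ≤ m ∧ ((sig d)^[k])^[m] x = x := by
  have hclosed := hG.isClosed_gapBasis
  have hn : 0 < d ^ k := pow_pos (by omega) k
  have hiter : (sig d)^[k] = (d ^ k • ·) := smul_iterate d k
  rw [hiter] at hinv ⊢
  exact ⟨degreeOn_nsmul_eq_one hn hclosed hcnt hinf.nonempty hinv,
    exists_isPeriodicPt_of_countable (continuous_nsmul _) hclosed hcnt hinf.nonempty
      (mapsTo_iff_image_subset.2 hinv.subset)⟩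

/-- a caterpillar gap (periodic infinite gap with countable basis) has
boundary degree one and contains a periodic point in its basis. -/
theorem stmt3 (d k : ℕ) (hd : 2 ≤ d) (hk : 1 ≤ k) (L : Geolam d) (G : Set ℂ)
    (hG : IsGap d L G)
    (hcnt : (gapBasis G).Countable) (hinf : (gapBasis G).Infinite)
    (hinv : (sig d)^[k] '' gapBasis G = gapBasis G)
    (hmin : ∀ j, 1 ≤ j → j < k → (sig d)^[j] '' gapBasis G ≠ gapBasis G) :
    DegreeOn ((sig d)^[k]) (gapBasis G) 1 ∧
    ∃ x ∈ gapBasis G, ∃ m, 1 ≤ m ∧ ((sig d)^[k])^[m] x = x :=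
  stmt3_general d k hd L G hG hcnt hinf hinv
end
end

section
/- Let C be a cone of a sibling σ_d-invariant geolamination with a periodic vertex v (a family of leaves all having endpoint v). If C is finite, then every leaf of C is periodic; more precisely, every point of the basis C' has the same period as v under σ_d. -/
open Function Set

noncomputable section

/-!
Sibling invariance makes `σ_d` preserve the circular order of the leaves of a cone, as long as it
does not collapse them; this is a counting argument with the siblings of a leaf of the cone.
If `v` has period `N`, then every leaf of the cone lifts along `σ_d^N` to a leaf of the cone, so
`σ_d^N` maps the cone onto itself, and a finite cone is permuted: every `x` in its basis is
periodic. An order-preserving permutation of the orbit of `x` fixes its least element, so the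
period of `x` divides `N`. The cone at `x` contains the periodic point `v`, and the same argument
there shows that `N` divides the period of `x`.
-/

/-- The position of `y` on the circle, measured counterclockwise from `u`, in `[0, 1)`. -/
def arcPos (u y : S1) : ℝ := AddCircle.equivIco 1 0 (y - u)

lemma arcPos_mem_Ico (u y : S1) : arcPos u y ∈ Ico 0 1 := by
  simpa [arcPos] using (AddCircle.equivIco 1 0 (y - u)).2

lemma add_arcPos (u y : S1) : u + (arcPos u y : S1) = y := by
  rw [arcPos, AddCircle.coe_equivIco]; abel

lemma arcPos_add_coe (u : S1) {t : ℝ} (ht : t ∈ Ico 0 1) : arcPos u (u + t) = t := by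
  rw [arcPos, add_sub_cancel_left, AddCircle.equivIco_coe_of_mem (by simpa using ht)]

lemma arcPos_injective (u : S1) : Injective (arcPos u) := fun y z h => by
  rw [← add_arcPos u y, h, add_arcPos]

lemma arcPos_self (u : S1) : arcPos u u = 0 := by
  simpa using arcPos_add_coe u (t := 0) (by simp)

lemma arcPos_pos {u y : S1} : 0 < arcPos u y ↔ y ≠ u := by
  rw [(arcPos_mem_Ico u y).1.lt_iff_ne', ← arcPos_self u, Ne, (arcPos_injective u).eq_iff]

lemma sig_add (d : ℕ) (a b : S1) : sig d (a + b) = sig d a + sig d b := smul_add _ _ _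

lemma sig_coe (d : ℕ) (r : ℝ) : sig d (r : S1) = ((d * r : ℝ) : S1) := by
  rw [sig, ← AddCircle.coe_nsmul, nsmul_eq_mul]

lemma sig_zero (t : S1) : sig 0 t = 0 := zero_smul ℕ t

lemma arcPos_sig (d : ℕ) (u y : S1) :
    arcPos (sig d u) (sig d y) = Int.fract (d * arcPos u y) := by
  conv_lhs => rw [← add_arcPos u y, sig_add, sig_coe, ← AddCircle.coe_fract]
  exact arcPos_add_coe _ ⟨Int.fract_nonneg _, Int.fract_lt_one _⟩

lemma sig_eq_sig_iff {d : ℕ} {u y : S1} :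
    sig d y = sig d u ↔ Int.fract (d * arcPos u y) = 0 := by
  rw [← arcPos_sig, ← not_iff_not, ← Ne, ← arcPos_pos, (arcPos_mem_Ico _ _).1.lt_iff_ne']

lemma sig_add_div (d : ℕ) (hd : d ≠ 0) (v : S1) (k : ℤ) :
    sig d (v + ((k / d : ℝ) : S1)) = sig d v := by
  rw [sig_add, sig_coe, mul_div_cancel₀ _ (by exact_mod_cast hd),
    (AddCircle.coe_eq_zero_iff 1).2 ⟨k, by simp⟩, add_zero]

lemma exists_fin_of_sig_eq {d : ℕ} (hd : d ≠ 0) {w z : S1} (h : sig d w = sig d z) :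
    ∃ k : Fin d, w = z + ((k / d : ℝ) : S1) := by
  obtain ⟨m, hm⟩ := Int.fract_eq_zero_iff.1 (sig_eq_sig_iff.1 h)
  obtain ⟨h0, h1⟩ := arcPos_mem_Ico z w
  have hd' : (0 : ℝ) < d := by positivity
  have hm0 : (0 : ℝ) ≤ m := by rw [hm]; positivity
  lift m to ℕ using by exact_mod_cast hm0
  refine ⟨⟨m, by exact_mod_cast (show (m : ℝ) < d by push_cast at hm; nlinarith)⟩, ?_⟩
  show w = z + ((m / d : ℝ) : S1)
  push_cast at hm
  rw [hm, mul_div_cancel_left₀ _ hd'.ne', add_arcPos]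

lemma mem_Ioo_of_mem_Ioc_floor {x x' : ℝ} {k : ℤ} (hk : k ∈ Finset.Ioc ⌊x⌋ ⌊x'⌋)
    (hx' : Int.fract x' ≠ 0) : (k : ℝ) ∈ Ioo x x' := by
  obtain ⟨h1, h2⟩ := Finset.mem_Ioc.1 hk
  exact ⟨Int.floor_lt.1 h1, (Int.le_floor.1 h2).lt_of_ne fun h =>
    hx' (Int.fract_eq_zero_iff.2 ⟨k, h⟩)⟩

lemma floor_mem_Ioo_of_fract_eq {x x' t : ℝ} (ht : t ∈ Ioo x x') (htx : Int.fract t = Int.fract x)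
    (hx' : Int.fract x' < Int.fract x) : ⌊t⌋ ∈ Finset.Ioo ⌊x⌋ ⌊x'⌋ := by
  rw [Finset.mem_Ioo, ← Int.cast_lt (R := ℝ), ← Int.cast_lt (R := ℝ)]
  rw [← Int.self_sub_floor, ← Int.self_sub_floor] at htx hx'
  constructor <;> linarith [ht.1, ht.2, Int.self_sub_floor t, Int.self_sub_floor x']

lemma floor_lt_floor_of_fract_lt {x x' : ℝ} (hx : x < x') (hx' : Int.fract x' < Int.fract x) :
    ⌊x⌋ < ⌊x'⌋ := by
  rw [← Int.cast_lt (R := ℝ)]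
  rw [← Int.self_sub_floor, ← Int.self_sub_floor] at hx'
  linarith

/-- The least point of the orbit is fixed: otherwise it and its predecessor on the orbit would be
mapped in reverse order. -/
lemma isFixedPt_of_preserves_lt_on_orbit {α β : Type*} [LinearOrder β] {g : α → α} {z : α}
    (hz : z ∈ periodicPts g) {f : α → β} (hf : Injective f)
    (hmono : ∀ i j, f (g^[i] z) < f (g^[j] z) → g^[i + 1] z ≠ g^[j + 1] z →
      f (g^[i + 1] z) < f (g^[j + 1] z)) : IsFixedPt g z := by
  set k := minimalPeriod g z
  have hk : 0 < k := minimalPeriod_pos_of_mem_periodicPts hz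
  obtain ⟨m, hmk, hm⟩ := (Finset.range k).exists_min_image (fun j => f (g^[j] z)) ⟨0, by simpa⟩
  have hmin (j : ℕ) : f (g^[m] z) ≤ f (g^[j] z) := by
    have := hm (j % k) (Finset.mem_range.2 (Nat.mod_lt _ hk))
    rwa [iterate_mod_minimalPeriod_eq] at this
  have hpred : g^[m + k - 1 + 1] z = g^[m] z := by
    rw [Nat.sub_add_cancel (by omega), iterate_add_minimalPeriod_eq]
  have hfix : IsFixedPt g (g^[m] z) := by
    by_contra hne
    have hne' : g^[m + 1] z ≠ g^[m + k - 1 + 1] z := by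
      rwa [hpred, iterate_succ_apply']
    have hlt : f (g^[m] z) < f (g^[m + k - 1] z) := (hmin _).lt_of_ne fun h => hne' <| by
      rw [iterate_succ_apply', iterate_succ_apply', hf h]
    have := hmono _ _ hlt hne'
    rw [hpred] at this
    exact (hmin (m + 1)).not_gt this
  have hzm : g^[m] z = z := by
    have := hfix.iterate (k - m)
    rwa [IsFixedPt, ← iterate_add_apply, Nat.sub_add_cancel (Finset.mem_range.1 hmk).le,
      iterate_minimalPeriod, eq_comm] at this
  rwa [← hzm]

/-- The cross product of plane vectors: `cross z w = z.re * w.im - z.im * w.re`. -/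
def cross (z w : ℂ) : ℝ := (starRingEnd ℂ z * w).im

lemma cross_mul_mul (c z w : ℂ) : cross (c * z) (c * w) = Complex.normSq c * cross z w := by
  simp only [cross, map_mul, Complex.mul_im, Complex.mul_re, Complex.conj_re, Complex.conj_im,
    Complex.normSq_apply]
  ring

lemma cross_smul_self (t : ℝ) (z : ℂ) : cross z (t • z) = 0 := by
  simp only [cross, Complex.real_smul, Complex.mul_im, Complex.mul_re, Complex.conj_re,
    Complex.conj_im, Complex.ofReal_re, Complex.ofReal_im]
  ring

lemma cross_add_smul (u z w : ℂ) (s t : ℝ) :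
    cross u (s • z + t • w) = s * cross u z + t * cross u w := by
  simp only [cross, mul_add, Complex.add_im, Complex.real_smul, mul_left_comm _ (s : ℂ),
    mul_left_comm _ (t : ℂ), Complex.im_ofReal_mul]

lemma cross_sub_eq_zero_of_mem_segment {A B z : ℂ} (hz : z ∈ segment ℝ A B) :
    cross (B - A) (z - A) = 0 := by
  obtain ⟨s, t, -, -, hst, rfl⟩ := hz
  obtain rfl : s = 1 - t := by linarith
  have : (1 - t) • A + t • B - A = t • (B - A) := by rw [sub_smul, one_smul, smul_sub]; abel
  rw [this, cross_smul_self]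

lemma exists_eq_smul_of_cross_eq_zero {u w : ℂ} (hu : u ≠ 0) (h : cross u w = 0) :
    ∃ r : ℝ, w = r • u := by
  refine ⟨(starRingEnd ℂ u * w).re / Complex.normSq u, ?_⟩
  have hn : (Complex.normSq u : ℂ) ≠ 0 := by exact_mod_cast (Complex.normSq_pos.2 hu).ne'
  have hre : ((starRingEnd ℂ u * w).re : ℂ) = starRingEnd ℂ u * w :=
    Complex.conj_eq_iff_re.mp (Complex.conj_eq_iff_im.mpr h)
  rw [Complex.real_smul, Complex.ofReal_div, hre, div_mul_eq_mul_div, eq_div_iff hn,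
    Complex.normSq_eq_conj_mul_self]
  ring

lemma normSq_add_smul_sub (A B : ℂ) (r : ℝ) :
    Complex.normSq (A + r • (B - A)) = (1 - r) * Complex.normSq A + r * Complex.normSq B
      - r * (1 - r) * Complex.normSq (B - A) := by
  simp only [Complex.normSq_apply, Complex.add_re, Complex.add_im, Complex.real_smul,
    Complex.re_ofReal_mul, Complex.im_ofReal_mul, Complex.sub_re, Complex.sub_im]
  ring

lemma add_smul_sub_mem_segment {A B : ℂ} (hA : ‖A‖ = 1) (hB : ‖B‖ = 1) (hAB : A ≠ B) {r : ℝ}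
    (hr : ‖A + r • (B - A)‖ < 1) : A + r • (B - A) ∈ segment ℝ A B := by
  have hsq := normSq_add_smul_sub A B r
  simp only [Complex.normSq_eq_norm_sq, hA, hB] at hsq
  have hBA : 0 < ‖B - A‖ ^ 2 := by positivity [sub_ne_zero.2 hAB.symm]
  have hpos : 0 < r * (1 - r) := by
    by_contra h
    nlinarith [norm_nonneg (A + r • (B - A))]
  have hr0 : 0 ≤ r := by nlinarith
  have hr1 : r ≤ 1 := by nlinarith
  refine ⟨1 - r, r, by linarith, hr0, by ring, ?_⟩
  rw [smul_sub, sub_smul, one_smul]; abel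

lemma exists_mem_segment_inter {A B C D : ℂ} (hA : ‖A‖ = 1) (hB : ‖B‖ = 1) (hC : ‖C‖ = 1)
    (hD : ‖D‖ = 1) (hAB : A ≠ B) (hCA : cross (B - A) (C - A) < 0)
    (hDA : 0 < cross (B - A) (D - A)) :
    ∃ z ∈ segment ℝ A B, z ∈ segment ℝ C D ∧ ‖z‖ < 1 := by
  set s := cross (B - A) (C - A)
  set t := cross (B - A) (D - A)
  -- the point of the segment `CD` on the line `AB`
  set P := (t / (t - s)) • C + (-s / (t - s)) • D
  have hts : 0 < t - s := by linarith
  have hsum : t / (t - s) + -s / (t - s) = 1 := by field_simp; ring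
  have hCD : C ≠ D := by rintro rfl; linarith
  have hP : ‖P‖ < 1 :=
    norm_combo_lt_of_ne hC.le hD.le hCD (div_pos hDA hts) (div_pos (neg_pos.2 hCA) hts) hsum
  have hPA : cross (B - A) (P - A) = 0 := by
    have : P - A = (t / (t - s)) • (C - A) + (-s / (t - s)) • (D - A) := by
      rw [smul_sub, smul_sub, ← add_sub_add_comm, ← add_smul, hsum, one_smul]
    rw [this, cross_add_smul]
    field_simp
    ring
  obtain ⟨r, hr⟩ := exists_eq_smul_of_cross_eq_zero (sub_ne_zero.2 hAB.symm) hPA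
  have hPr : P = A + r • (B - A) := by rw [← hr]; abel
  refine ⟨P, ?_, ⟨_, _, (div_pos hDA hts).le, (div_pos (neg_pos.2 hCA) hts).le, hsum, rfl⟩, hP⟩
  rw [hPr] at hP ⊢
  exact add_smul_sub_mem_segment hA hB hAB hP

lemma norm_pt (t : S1) : ‖pt t‖ = 1 := Circle.norm_coe _

lemma pt_add_coe (u : S1) (t : ℝ) :
    pt (u + t) = pt u * Complex.exp (↑(2 * Real.pi * t) * Complex.I) := by
  simp only [pt, AddCircle.toCircle_add, Circle.coe_mul, AddCircle.toCircle_apply_mk,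
    Circle.coe_exp]
  push_cast
  ring_nf

lemma cross_pt_sub (u : S1) (a b : ℝ) :
    cross (pt (u + a) - pt u) (pt (u + b) - pt u) =
      4 * Real.sin (Real.pi * a) * Real.sin (Real.pi * b) * Real.sin (Real.pi * (b - a)) := by
  have hfac (t : ℝ) :
      pt (u + t) - pt u = pt u * (Complex.exp (↑(2 * Real.pi * t) * Complex.I) - 1) := by
    rw [pt_add_coe]; ring
  rw [hfac, hfac, cross_mul_mul, Complex.normSq_eq_norm_sq, norm_pt, one_pow, one_mul]
  simp only [cross, map_sub, map_one, Complex.mul_im, Complex.sub_re, Complex.sub_im,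
    Complex.conj_re, Complex.conj_im, Complex.exp_ofReal_mul_I_re, Complex.exp_ofReal_mul_I_im,
    Complex.one_re, Complex.one_im]
  have h2 (t : ℝ) : 2 * Real.pi * t = 2 * (Real.pi * t) := by ring
  rw [h2, h2, mul_sub Real.pi, Real.sin_sub, Real.sin_two_mul, Real.sin_two_mul, Real.cos_two_mul,
    Real.cos_two_mul, Real.cos_sq', Real.cos_sq']
  ring

lemma sin_pi_mul_pos {t : ℝ} (h0 : 0 < t) (h1 : t < 1) : 0 < Real.sin (Real.pi * t) :=
  Real.sin_pos_of_pos_of_lt_pi (by positivity) (by nlinarith [Real.pi_pos])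

lemma crosses_chord {u y w₁ w₂ : S1} (h₁ : 0 < arcPos u w₁) (h₂ : arcPos u w₁ < arcPos u y)
    (h₃ : arcPos u y < arcPos u w₂) :
    Crosses (chord u y) (chord w₁ w₂) ∧ chord u y ≠ chord w₁ w₂ := by
  obtain ⟨-, hc1⟩ := arcPos_mem_Ico u w₂
  have hy := add_arcPos u y
  have hw₁ := add_arcPos u w₁
  have hw₂ := add_arcPos u w₂
  set a := arcPos u y
  set b := arcPos u w₁
  set c := arcPos u w₂
  have hsa := sin_pi_mul_pos (h₁.trans h₂) (h₃.trans hc1)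
  have hneg : cross (pt y - pt u) (pt w₁ - pt u) < 0 := by
    rw [← hy, ← hw₁, cross_pt_sub]
    have hsb := sin_pi_mul_pos h₁ (by linarith)
    have hsba := Real.sin_neg_of_neg_of_neg_pi_lt (x := Real.pi * (b - a))
      (by nlinarith [Real.pi_pos]) (by nlinarith [Real.pi_pos])
    nlinarith [mul_pos hsa hsb]
  have hpos : 0 < cross (pt y - pt u) (pt w₂ - pt u) := by
    rw [← hy, ← hw₂, cross_pt_sub]
    have := sin_pi_mul_pos (h₁.trans (h₂.trans h₃)) hc1
    have := sin_pi_mul_pos (t := c - a) (by linarith) (by linarith)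
    positivity
  have huy : pt u ≠ pt y := by
    intro h
    rw [h, sub_self] at hneg
    simp [cross] at hneg
  refine ⟨exists_mem_segment_inter (norm_pt u) (norm_pt y) (norm_pt w₁) (norm_pt w₂) huy hneg
    hpos, fun h => hneg.ne ?_⟩
  apply cross_sub_eq_zero_of_mem_segment
  rw [← chord, h]
  exact left_mem_segment ℝ _ _

lemma eq_of_fst_eq_of_disjoint_chord {ι : Type*} {f : ι → S1 × S1}
    (hf : ∀ i j, i ≠ j → Disjoint (chord (f i).1 (f i).2) (chord (f j).1 (f j).2)) {i j : ι}
    (h : (f i).1 = (f j).1) : i = j := by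
  by_contra hij
  refine Set.disjoint_left.1 (hf i j hij) (left_mem_segment ℝ _ _) ?_
  rw [h]; exact left_mem_segment ℝ _ _

lemma eq_of_snd_eq_of_disjoint_chord {ι : Type*} {f : ι → S1 × S1}
    (hf : ∀ i j, i ≠ j → Disjoint (chord (f i).1 (f i).2) (chord (f j).1 (f j).2)) {i j : ι}
    (h : (f i).2 = (f j).2) : i = j := by
  by_contra hij
  refine Set.disjoint_left.1 (hf i j hij) (right_mem_segment ℝ _ _) ?_
  rw [h]; exact right_mem_segment ℝ _ _

namespace Geolam

variable {d : ℕ} (L : Geolam d)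

lemma not_separated {u y w₁ w₂ : S1} (hy : (u, y) ∈ L.leaves) (hw : (w₁, w₂) ∈ L.leaves)
    (h₁ : 0 < arcPos u w₁) (h₂ : arcPos u w₁ < arcPos u y) (h₃ : arcPos u y < arcPos u w₂) :
    False := by
  obtain ⟨hcross, hne⟩ := crosses_chord h₁ h₂ h₃
  exact (L.unlinked _ hy _ hw).elim hne (· hcross)

lemma iterate_mem {a b : S1} (hp : (a, b) ∈ L.leaves) (n : ℕ) :
    ((sig d)^[n] a, (sig d)^[n] b) ∈ L.leaves := by
  induction n with
  | zero => exact hp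
  | succ n ih => simpa only [iterate_succ_apply'] using L.fwd _ ih

/-- The `d` siblings of `p` start at `d` distinct preimages of `σ_d p.1`, hence at all of them. -/
lemma exists_sibling_map {p : S1 × S1} (hp : p ∈ L.leaves) (hnd : sig d p.1 ≠ sig d p.2) :
    ∃ g : S1 → S1, g p.1 = p.2 ∧ InjOn g {w | sig d w = sig d p.1} ∧
      ∀ w, sig d w = sig d p.1 → (w, g w) ∈ L.leaves ∧ sig d (g w) = sig d p.2 := by
  classical
  have hd : d ≠ 0 := by rintro rfl; exact hnd (by simp only [sig_zero])
  obtain ⟨f, ⟨i₀, hi₀⟩, hf, hfs, hfd⟩ := L.sibling p hp hnd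
  set e : Fin d → S1 := fun i => (f i).1
  have : Nonempty (Fin d) := ⟨i₀⟩
  have he : Injective e := fun i j h => eq_of_fst_eq_of_disjoint_chord hfd h
  have hcover : ∀ w, sig d w = sig d p.1 → ∃ i, e i = w := by
    set T := Finset.univ.image fun k : Fin d => p.1 + ((k / d : ℝ) : S1)
    have hsub : Finset.univ.image e ⊆ T := by
      intro w hw
      obtain ⟨i, -, rfl⟩ := Finset.mem_image.1 hw
      obtain ⟨k, hk⟩ := exists_fin_of_sig_eq hd (hfs i).1
      exact Finset.mem_image.2 ⟨k, Finset.mem_univ _, hk.symm⟩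
    have hcard : T.card ≤ (Finset.univ.image e).card := by
      rw [Finset.card_image_of_injective _ he, Finset.card_univ, Fintype.card_fin]
      exact Finset.card_image_le.trans (by simp)
    intro w hw
    obtain ⟨k, rfl⟩ := exists_fin_of_sig_eq hd hw
    have hk : p.1 + ((k / d : ℝ) : S1) ∈ Finset.univ.image e :=
      Finset.eq_of_subset_of_card_le hsub hcard ▸ Finset.mem_image_of_mem _ (Finset.mem_univ k)
    obtain ⟨i, -, hi⟩ := Finset.mem_image.1 hk
    exact ⟨i, hi⟩
  refine ⟨fun w => (f (invFun e w)).2, ?_, ?_, fun w hw => ?_⟩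
  · simp only [← hi₀]
    rw [show (f i₀).1 = e i₀ from rfl, leftInverse_invFun he]
  · intro w hw w' hw' h
    rw [← invFun_eq (hcover w hw), ← invFun_eq (hcover w' hw'),
      eq_of_snd_eq_of_disjoint_chord hfd h]
  · have hfw : f (invFun e w) = (w, (f (invFun e w)).2) := Prod.ext (invFun_eq (hcover w hw)) rfl
    exact ⟨hfw ▸ hf _, (hfs _).2⟩

lemma exists_leaf_sig_eq {w y : S1} (h : (sig d w, y) ∈ L.leaves) (hne : sig d w ≠ y) :
    ∃ c, (w, c) ∈ L.leaves ∧ sig d c = y := by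
  obtain ⟨q, hq, hqe⟩ := L.bwd _ h
  simp only [Prod.mk.injEq] at hqe
  obtain ⟨g, -, -, hg⟩ := L.exists_sibling_map hq (hqe.1 ▸ hqe.2 ▸ hne)
  obtain ⟨hgl, hgs⟩ := hg w hqe.1.symm
  exact ⟨g w, hgl, hgs.trans hqe.2⟩

lemma exists_leaf_iterate_eq (n : ℕ) {w y : S1} (h : ((sig d)^[n] w, y) ∈ L.leaves)
    (hne : (sig d)^[n] w ≠ y) : ∃ c, (w, c) ∈ L.leaves ∧ (sig d)^[n] c = y := by
  induction n generalizing w with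
  | zero => exact ⟨y, h, rfl⟩
  | succ n ih =>
    rw [iterate_succ_apply] at h hne
    obtain ⟨c', hc', hc'y⟩ := ih h hne
    obtain ⟨c, hc, rfl⟩ := L.exists_leaf_sig_eq hc' (by rintro rfl; exact hne hc'y)
    exact ⟨c, hc, by rwa [iterate_succ_apply]⟩

lemma arcPos_mem_Ioo_of_mem_Ioo {v y z w y' : S1} (hy : (v, y) ∈ L.leaves)
    (hz : (v, z) ∈ L.leaves) (hw : (w, y') ∈ L.leaves) (hyv : y ≠ v)
    (hwI : arcPos v w ∈ Ioo (arcPos v y) (arcPos v z)) (hy'v : y' ≠ v) (hy'y : y' ≠ y)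
    (hy'z : y' ≠ z) : arcPos v y' ∈ Ioo (arcPos v y) (arcPos v z) := by
  obtain ⟨hyw, hwz⟩ := hwI
  refine ⟨lt_of_le_of_ne (not_lt.1 fun h => ?_) fun h => hy'y (arcPos_injective v h.symm),
    lt_of_le_of_ne (not_lt.1 fun h => ?_) fun h => hy'z (arcPos_injective v h)⟩
  · exact L.not_separated hy (L.symm _ hw) (arcPos_pos.2 hy'v) h hyw
  · exact L.not_separated hz hw ((arcPos_pos.2 hyv).trans hyw) hwz h

lemma exists_sibling_map_Ioo {v y z : S1} (hy : (v, y) ∈ L.leaves) (hz : (v, z) ∈ L.leaves)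
    (hy' : sig d y ≠ sig d v) (hz' : sig d z ≠ sig d v) (hyz' : sig d y ≠ sig d z) :
    ∃ g : S1 → S1, InjOn g {w | sig d w = sig d v} ∧ ∀ w, sig d w = sig d v →
      arcPos v w ∈ Ioo (arcPos v y) (arcPos v z) →
        sig d (g w) = sig d y ∧ arcPos v (g w) ∈ Ioo (arcPos v y) (arcPos v z) := by
  obtain ⟨g, hgv, hginj, hg⟩ := L.exists_sibling_map hy hy'.symm
  refine ⟨g, hginj, fun w hw hwI => ⟨(hg w hw).2, ?_⟩⟩
  have hgσ : sig d (g w) = sig d y := (hg w hw).2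
  have hyv : y ≠ v := by rintro rfl; exact hy' rfl
  have hwv : w ≠ v := by
    rintro rfl
    exact (arcPos_self w ▸ hwI.1).not_ge (arcPos_mem_Ico w y).1
  refine L.arcPos_mem_Ioo_of_mem_Ioo hy hz (hg w hw).1 hyv hwI (fun h => hy' ?_)
    (fun h => hwv (hginj hw rfl (h.trans hgv.symm))) (fun h => hyz' ?_)
  all_goals rw [← hgσ, h]

/-- Write `x = d · arcPos v y` and `x' = d · arcPos v z`. If the images were in reverse order,
i.e. `fract x' < fract x`, then each of the `⌊x'⌋ - ⌊x⌋` preimages `v + k/d` of `σ_d v` strictly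
between `y` and `z` would start a sibling of `(v, y)` ending strictly between `y` and `z`, at some
`v + t/d` with `x < t < x'` and `fract t = fract x`. Such a `t` is determined by
`⌊x⌋ < ⌊t⌋ < ⌊x'⌋`, so there are only `⌊x'⌋ - ⌊x⌋ - 1` of them. -/
lemma arcPos_sig_lt {v y z : S1} (hy : (v, y) ∈ L.leaves) (hz : (v, z) ∈ L.leaves)
    (hyz : arcPos v y < arcPos v z) (hy' : sig d y ≠ sig d v)
    (hz' : sig d z ≠ sig d v) (hyz' : sig d y ≠ sig d z) :
    arcPos (sig d v) (sig d y) < arcPos (sig d v) (sig d z) := by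
  have hd : d ≠ 0 := by rintro rfl; exact hy' (by simp only [sig_zero])
  have hd' : (0 : ℝ) < d := by positivity
  set a := arcPos v y
  set b := arcPos v z
  rw [arcPos_sig, arcPos_sig]
  by_contra hle
  have hlt : Int.fract (d * b) < Int.fract (d * a) := (not_lt.1 hle).lt_of_ne fun h =>
    hyz' (by rw [← arcPos_injective (sig d v) |>.eq_iff, arcPos_sig, arcPos_sig, h])
  obtain ⟨g, hginj, hg⟩ := L.exists_sibling_map_Ioo hy hz hy' hz' hyz'
  set w : ℤ → S1 := fun k => v + ((k / d : ℝ) : S1)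
  have hw : ∀ k ∈ Finset.Ioc ⌊d * a⌋ ⌊d * b⌋,
      sig d (w k) = sig d v ∧ arcPos v (w k) = k / d ∧ (k : ℝ) / d ∈ Ioo a b := by
    intro k hk
    obtain ⟨h1, h2⟩ := mem_Ioo_of_mem_Ioc_floor hk fun h => hz' (sig_eq_sig_iff.2 h)
    have hI : (k : ℝ) / d ∈ Ioo a b :=
      ⟨(lt_div_iff₀' hd').2 h1, (div_lt_iff₀' hd').2 h2⟩
    exact ⟨sig_add_div d hd v k, arcPos_add_coe v ⟨(arcPos_mem_Ico v y).1.trans hI.1.le,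
      hI.2.trans (arcPos_mem_Ico v z).2⟩, hI⟩
  have hgw (k : ℤ) (hk : k ∈ Finset.Ioc ⌊d * a⌋ ⌊d * b⌋) :=
    hg _ (hw k hk).1 ((hw k hk).2.1 ▸ (hw k hk).2.2)
  have hfract (k : ℤ) (hk : k ∈ Finset.Ioc ⌊d * a⌋ ⌊d * b⌋) :
      Int.fract (d * arcPos v (g (w k))) = Int.fract (d * a) := by
    rw [← arcPos_sig, ← arcPos_sig, (hgw k hk).1]
  have hmaps : ∀ k ∈ Finset.Ioc ⌊d * a⌋ ⌊d * b⌋,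
      ⌊d * arcPos v (g (w k))⌋ ∈ Finset.Ioo ⌊d * a⌋ ⌊d * b⌋ := by
    intro k hk
    obtain ⟨h1, h2⟩ := (hgw k hk).2
    exact floor_mem_Ioo_of_fract_eq ⟨by gcongr, by gcongr⟩ (hfract k hk) hlt
  have hinj : InjOn (fun k => ⌊d * arcPos v (g (w k))⌋) (Finset.Ioc ⌊d * a⌋ ⌊d * b⌋) := by
    intro k hk k' hk' h
    dsimp only at h
    have hψ : d * arcPos v (g (w k)) = d * arcPos v (g (w k')) := by
      rw [← Int.floor_add_fract (d * arcPos v (g (w k))), hfract k hk, h, ← hfract k' hk',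
        Int.floor_add_fract]
    have := congrArg (arcPos v) (hginj (hw k hk).1 (hw k' hk').1
      (arcPos_injective v (mul_left_cancel₀ hd'.ne' hψ)))
    rw [(hw k hk).2.1, (hw k' hk').2.1, div_left_inj' hd'.ne'] at this
    exact_mod_cast this
  have hcard := Finset.card_le_card_of_injOn _ hmaps hinj
  rw [Int.card_Ioc, Int.card_Ioo] at hcard
  have := floor_lt_floor_of_fract_lt (mul_lt_mul_of_pos_left hyz hd') hlt
  omega

lemma arcPos_iterate_lt {v y z : S1} (hy : (v, y) ∈ L.leaves) (hz : (v, z) ∈ L.leaves)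
    (hyz : arcPos v y < arcPos v z) (n : ℕ)
    (hy' : (sig d)^[n] y ≠ (sig d)^[n] v) (hz' : (sig d)^[n] z ≠ (sig d)^[n] v)
    (hyz' : (sig d)^[n] y ≠ (sig d)^[n] z) :
    arcPos ((sig d)^[n] v) ((sig d)^[n] y) < arcPos ((sig d)^[n] v) ((sig d)^[n] z) := by
  induction n with
  | zero => exact hyz
  | succ n ih =>
    simp only [iterate_succ_apply'] at hy' hz' hyz' ⊢
    have hy'' : (sig d)^[n] y ≠ (sig d)^[n] v := fun h => hy' (by rw [h])
    exact L.arcPos_sig_lt (L.iterate_mem hy n) (L.iterate_mem hz n)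
      (ih hy'' (fun h => hz' (by rw [h])) (fun h => hyz' (by rw [h]))) hy' hz' hyz'

lemma isPeriodicPt_of_mem_cone {M : ℕ} {u z : S1} (hu : IsPeriodicPt (sig d) M u)
    (hz : (u, z) ∈ L.leaves) (hzu : z ≠ u) (hzp : z ∈ periodicPts (sig d)) :
    IsPeriodicPt (sig d) M z := by
  obtain ⟨n, hn, hzn⟩ := mem_periodicPts.1 hzp
  have hgu (j : ℕ) : ((sig d)^[M])^[j] u = u := (IsFixedPt.iterate hu j).eq
  have horb (j : ℕ) : ((sig d)^[M])^[j] z ≠ u := fun h => hzu <|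
    calc z = ((sig d)^[M])^[n * (j + 1)] z := (((hzn.iterate M).mul_const (j + 1)).eq).symm
      _ = ((sig d)^[M])^[n * (j + 1) - j] (((sig d)^[M])^[j] z) := by
        rw [← iterate_add_apply, Nat.sub_add_cancel (by nlinarith)]
      _ = u := by rw [h, hgu]
  have hleaf (j : ℕ) : (u, ((sig d)^[M])^[j] z) ∈ L.leaves := by
    simpa only [iterate_mul, hgu] using L.iterate_mem hz (M * j)
  refine isFixedPt_of_preserves_lt_on_orbit (mk_mem_periodicPts hn (hzn.iterate M))
    (arcPos_injective u) fun i j hij hne => ?_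
  rw [iterate_succ_apply', iterate_succ_apply'] at hne ⊢
  have := L.arcPos_iterate_lt (hleaf i) (hleaf j) hij M
    (by rw [hu.eq, ← iterate_succ_apply' (sig d)^[M]]; exact horb _)
    (by rw [hu.eq, ← iterate_succ_apply' (sig d)^[M]]; exact horb _) hne
  rwa [hu.eq] at this

lemma mem_periodicPts_of_finite_cone {v x : S1} (hv : v ∈ periodicPts (sig d))
    (hfin : {y | (v, y) ∈ L.leaves}.Finite) (hx : (v, x) ∈ L.leaves) :
    x ∈ periodicPts (sig d) := by
  obtain ⟨N, hN, hvN⟩ := mem_periodicPts.1 hv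
  have hmaps : MapsTo (sig d)^[N] {y | (v, y) ∈ L.leaves} {y | (v, y) ∈ L.leaves} :=
    fun y hy => by have := L.iterate_mem hy N; rwa [hvN.eq] at this
  have hsurj : SurjOn (sig d)^[N] {y | (v, y) ∈ L.leaves} {y | (v, y) ∈ L.leaves} := by
    intro y hy
    by_cases hyv : v = y
    · exact ⟨v, L.degen v, hvN.eq.trans hyv⟩
    · rw [← hvN.eq] at hy hyv
      exact L.exists_leaf_iterate_eq N hy hyv
  have := hfin.to_subtype
  have hinj := Finite.injective_iff_surjective.2 (hmaps.restrict_surjective_iff.2 hsurj)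
  obtain ⟨m, hm, hxm⟩ := mem_periodicPts.1 (hinj.mem_periodicPts ⟨x, hx⟩)
  refine mk_mem_periodicPts (Nat.mul_pos hN hm) ?_
  have := congrArg Subtype.val hxm
  rwa [hmaps.iterate_restrict, MapsTo.val_restrict_apply, ← iterate_mul] at this

end Geolam

theorem stmt5_general (d : ℕ) (L : Geolam d) (v : S1)
    (hv : v ∈ periodicPts (sig d))
    (hfin : {x : S1 | x ≠ v ∧ (v, x) ∈ L.leaves}.Finite) :
    ∀ x : S1, x ≠ v → (v, x) ∈ L.leaves →
      x ∈ periodicPts (sig d) ∧ minimalPeriod (sig d) x = minimalPeriod (sig d) v := by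
  intro x hxv hx
  have hcone : {y | (v, y) ∈ L.leaves}.Finite :=
    (hfin.insert v).subset fun y hy => or_iff_not_imp_left.2 fun hyv => ⟨hyv, hy⟩
  have hxp := L.mem_periodicPts_of_finite_cone hv hcone hx
  have hxN := L.isPeriodicPt_of_mem_cone (isPeriodicPt_minimalPeriod _ v) hx hxv hxp
  have hvP := L.isPeriodicPt_of_mem_cone (isPeriodicPt_minimalPeriod _ x) (L.symm _ hx)
    hxv.symm hv
  exact ⟨hxp, Nat.dvd_antisymm hxN.minimalPeriod_dvd hvP.minimalPeriod_dvd⟩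

/-- if the cone of all leaves at a periodic vertex `v` is finite, then every
point of its basis is periodic of the same period as `v`. -/
theorem stmt5 (d : ℕ) (hd : 2 ≤ d) (L : Geolam d) (v : S1)
    (hv : v ∈ periodicPts (sig d))
    (hfin : {x : S1 | x ≠ v ∧ (v, x) ∈ L.leaves}.Finite) :
    ∀ x : S1, x ≠ v → (v, x) ∈ L.leaves →
      x ∈ periodicPts (sig d) ∧ minimalPeriod (sig d) x = minimalPeriod (sig d) v :=
  stmt5_general d L v hv hfin

end
end

section
/- Let C be an infinite cone of a sibling σ_d-invariant geolamination with vertex v fixed by σ_d^n. Then every leaf of C is eventually mapped by iterates of σ_d^n to a degenerate leaf or to a leaf with both endpoints fixed by σ_d^n; i.e., each leaf in C is (pre)critical or (pre)periodic. Moreover C contains only finitely many leaves [v, a] with σ_d^n(a) = a. -/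
open Function Set

noncomputable section

/-!
In a cone with vertex `w`, `σ_d` keeps the circular order of the leaves around `w`: if the
images of `[w, a]` and `[w, b]` came out in the wrong order, counting the preimages of their
endpoints would produce a sibling of `[w, b]` with one endpoint strictly between `w` and `a` and
the other strictly beyond `a`, and that sibling crosses `[w, a]`.

So if `σ_d^n` fixes `v` and the orbit of a leaf `[v, x]` reaches neither `v` nor a fixed point,
the angles at `v` of the leaves `[v, σ_d^{nj} x]` are strictly monotone in `j`, hence converge.
But `σ_d^n` multiplies the difference of two nearby angles by `d^n`, so consecutive angles cannot
get arbitrarily close. The second claim holds because the fixed points of `σ_d^n` are the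
`(d^n - 1)`-torsion of the circle.
-/

open Real Filter Topology

def rep (x : S1) : ℝ := AddCircle.equivIco 1 0 x

def ccwDist (w x : S1) : ℝ := rep (x - w)

lemma rep_mem_Ico (x : S1) : rep x ∈ Ico (0 : ℝ) 1 := by
  simpa [rep] using (AddCircle.equivIco 1 (0 : ℝ) x).2

@[simp] lemma coe_rep (x : S1) : ((rep x : ℝ) : S1) = x := AddCircle.coe_equivIco

lemma rep_coe (y : ℝ) : rep (y : S1) = Int.fract y := by
  have hfract : ((Int.fract y : ℝ) : S1) = y := by
    rw [Int.fract, AddCircle.coe_sub, sub_eq_self, AddCircle.coe_eq_zero_iff]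
    exact ⟨⌊y⌋, by simp⟩
  rw [rep, ← hfract, AddCircle.equivIco_coe_of_mem (by simpa using Int.fract_lt_one y)]

lemma rep_injective : Injective rep := fun x y h => by rw [← coe_rep x, ← coe_rep y, h]

lemma rep_eq_zero_iff {x : S1} : rep x = 0 ↔ x = 0 := by
  rw [← rep_injective.eq_iff, show rep 0 = 0 by simpa using rep_coe 0]

lemma ccwDist_nonneg (w x : S1) : 0 ≤ ccwDist w x := (rep_mem_Ico _).1

lemma ccwDist_lt_one (w x : S1) : ccwDist w x < 1 := (rep_mem_Ico _).2

lemma ccwDist_pos_iff {w x : S1} : 0 < ccwDist w x ↔ x ≠ w := by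
  rw [(ccwDist_nonneg w x).lt_iff_ne', Ne, ccwDist, rep_eq_zero_iff, sub_eq_zero]

lemma ccwDist_injective (w : S1) : Injective (ccwDist w) :=
  fun _ _ h => sub_left_injective (rep_injective h)

@[simp] lemma ccwDist_self (w : S1) : ccwDist w w = 0 := by
  rw [ccwDist, sub_self, rep_eq_zero_iff]

lemma add_ccwDist (w x : S1) : w + ((ccwDist w x : ℝ) : S1) = x := by
  rw [ccwDist, coe_rep, add_sub_cancel]

lemma ccwDist_nsmul (m : ℕ) (w x : S1) :
    ccwDist (m • w) (m • x) = Int.fract (m * ccwDist w x) := by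
  rw [ccwDist, ← smul_sub, ← coe_rep (x - w), ← AddCircle.coe_nsmul, rep_coe, nsmul_eq_mul,
    ccwDist]

lemma sig_iterate (d k : ℕ) (x : S1) : (sig d)^[k] x = d ^ k • x := smul_iterate_apply d k x

-- The cross product `(B - A) × (P - A)`; its sign tells on which side of the line `AB` lies `P`.
def orient (A B P : ℂ) : ℝ := (B - A).re * (P - A).im - (B - A).im * (P - A).re

lemma normSq_add_mul_sub {A B : ℂ} (hA : Complex.normSq A = 1) (hB : Complex.normSq B = 1)
    (μ : ℝ) :
    Complex.normSq (A + μ * (B - A)) = 1 + μ * (μ - 1) * Complex.normSq (B - A) := by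
  simp only [Complex.normSq_apply, Complex.add_re, Complex.add_im, Complex.mul_re,
    Complex.mul_im, Complex.sub_re, Complex.sub_im, Complex.ofReal_re,
    Complex.ofReal_im] at hA hB ⊢
  linear_combination (1 - μ) * hA + μ * hB

lemma orient_add_mul_sub (A B C D : ℂ) (t : ℝ) :
    orient A B (C + t * (D - C)) = (1 - t) * orient A B C + t * orient A B D := by
  simp only [orient, Complex.add_re, Complex.add_im, Complex.mul_re, Complex.mul_im,
    Complex.sub_re, Complex.sub_im, Complex.ofReal_re, Complex.ofReal_im]
  ring

lemma exists_eq_add_mul_sub_of_orient_eq_zero {A B z : ℂ} (hAB : A ≠ B)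
    (hz : orient A B z = 0) : ∃ μ : ℝ, z = A + μ * (B - A) := by
  have hBA : B - A ≠ 0 := sub_ne_zero.2 hAB.symm
  refine ⟨((z - A) / (B - A)).re, ?_⟩
  have him : ((z - A) / (B - A)).im = 0 := by
    rw [Complex.div_im, div_sub_div_same, ← neg_eq_zero, ← neg_div, div_eq_zero_iff]
    left
    simp only [orient] at hz
    linarith
  have hreal : ((((z - A) / (B - A)).re : ℝ) : ℂ) = (z - A) / (B - A) :=
    Complex.ext (by simp) (by simp [him])
  rw [hreal, div_mul_cancel₀ _ hBA]
  ring

lemma mem_segment_of_normSq_lt_one {A B : ℂ} (hA : Complex.normSq A = 1)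
    (hB : Complex.normSq B = 1) {μ : ℝ} (h : Complex.normSq (A + μ * (B - A)) < 1) :
    A + μ * (B - A) ∈ segment ℝ A B := by
  rw [normSq_add_mul_sub hA hB] at h
  have hμ : μ * (μ - 1) < 0 := by
    by_contra! h'
    nlinarith [Complex.normSq_nonneg (B - A)]
  rw [segment_eq_image']
  exact ⟨μ, ⟨by nlinarith, by nlinarith⟩, by simp [Complex.real_smul]⟩

lemma crosses_of_orient_neg_of_orient_pos {A B C D : ℂ} (hA : Complex.normSq A = 1)
    (hB : Complex.normSq B = 1) (hC : Complex.normSq C = 1) (hD : Complex.normSq D = 1)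
    (hAC : orient A B C < 0) (hAD : 0 < orient A B D) :
    Crosses (segment ℝ A B) (segment ℝ C D) := by
  set t := orient A B C / (orient A B C - orient A B D)
  have ht0 : 0 < t := div_pos_of_neg_of_neg hAC (by linarith)
  have ht1 : t < 1 := (div_lt_one_of_neg (by linarith)).2 (by linarith)
  have hCD : C ≠ D := by rintro rfl; linarith
  have hz : orient A B (C + t * (D - C)) = 0 := by
    have hden : orient A B C - orient A B D ≠ 0 := by linarith
    rw [orient_add_mul_sub]
    simp only [t]
    field_simp
    ring
  have hnormSq : Complex.normSq (C + t * (D - C)) < 1 := by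
    rw [normSq_add_mul_sub hC hD]
    have := Complex.normSq_pos.2 (sub_ne_zero.2 hCD.symm)
    nlinarith [mul_pos ht0 (sub_pos.2 ht1)]
  have hAB : A ≠ B := by rintro rfl; simp [orient] at hAC
  obtain ⟨μ, hμ⟩ := exists_eq_add_mul_sub_of_orient_eq_zero hAB hz
  refine ⟨C + t * (D - C), ?_, ?_, ?_⟩
  · rw [hμ] at hnormSq ⊢
    exact mem_segment_of_normSq_lt_one hA hB hnormSq
  · rw [segment_eq_image']
    exact ⟨t, ⟨ht0.le, ht1.le⟩, by simp [Complex.real_smul]⟩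
  · rw [← sq_lt_one_iff₀ (norm_nonneg _), ← Complex.normSq_eq_norm_sq]
    exact hnormSq

lemma normSq_pt (t : S1) : Complex.normSq (pt t) = 1 := by
  rw [Complex.normSq_eq_norm_sq, pt, Circle.norm_coe, one_pow]

lemma pt_injective : Injective pt :=
  fun _ _ h => AddCircle.injective_toCircle one_ne_zero (Circle.coe_injective h)

lemma pt_coe (u : ℝ) : pt u = ⟨cos (2 * π * u), sin (2 * π * u)⟩ := by
  rw [pt, AddCircle.toCircle_apply_mk, Circle.coe_exp, div_one]
  apply Complex.ext
  · simpa using Complex.exp_ofReal_mul_I_re (2 * π * u)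
  · simpa using Complex.exp_ofReal_mul_I_im (2 * π * u)

lemma orient_pt_add (w : S1) (T c : ℝ) :
    orient (pt w) (pt (w + T)) (pt (w + c)) =
      4 * sin (π * (c - T)) * sin (π * T) * sin (π * c) := by
  induction w using QuotientAddGroup.induction_on with | H x => ?_
  rw [← AddCircle.coe_add, ← AddCircle.coe_add]
  have hT : 2 * π * (x + T) = 2 * π * x + 2 * (π * T) := by ring
  have hc : 2 * π * (x + c) = 2 * π * x + 2 * (π * c) := by ring
  simp only [orient, pt_coe, Complex.sub_re, Complex.sub_im]
  rw [hT, hc, mul_sub π c T, Real.sin_sub, Real.cos_add, Real.sin_add, Real.cos_add, Real.sin_add,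
    Real.cos_two_mul, Real.cos_two_mul, Real.sin_two_mul, Real.sin_two_mul]
  linear_combination (-4 * sin (π * c) * cos (π * c)
      + 4 * cos (π * T) ^ 2 * sin (π * c) * cos (π * c)
      + 4 * sin (π * T) * cos (π * T)
      - 4 * sin (π * T) * cos (π * T) * cos (π * c) ^ 2)
        * Real.sin_sq_add_cos_sq (2 * π * x)
    + 4 * sin (π * c) * cos (π * c) * Real.sin_sq_add_cos_sq (π * T)
    - 4 * sin (π * T) * cos (π * T) * Real.sin_sq_add_cos_sq (π * c)

lemma pt_mem_chord_iff {a b x : S1} : pt x ∈ chord a b ↔ x = a ∨ x = b := by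
  constructor
  · intro hx
    rw [chord, segment_eq_image'] at hx
    obtain ⟨t, -, hxt⟩ := hx
    simp only [Complex.real_smul] at hxt
    have hnormSq := normSq_pt x
    rw [← hxt, normSq_add_mul_sub (normSq_pt a) (normSq_pt b)] at hnormSq
    rcases mul_eq_zero.1 (show t * (t - 1) * Complex.normSq (pt b - pt a) = 0 by linarith) with
      ht | hab
    · rcases mul_eq_zero.1 ht with ht | ht
      · left; apply pt_injective; simp [← hxt, ht]
      · right; apply pt_injective; simp [← hxt, sub_eq_zero.1 ht]
    · left; apply pt_injective; simp [← hxt, Complex.normSq_eq_zero.1 hab]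
  · rintro (rfl | rfl)
    exacts [left_mem_segment .., right_mem_segment ..]

lemma crosses_chord_of_ccwDist {w a p q : S1} (hp : 0 < ccwDist w p)
    (hpa : ccwDist w p < ccwDist w a) (haq : ccwDist w a < ccwDist w q) :
    Crosses (chord w a) (chord q p) := by
  have hq := ccwDist_lt_one w q
  rw [chord, chord, segment_symm ℝ (pt q), ← add_ccwDist w a, ← add_ccwDist w p,
    ← add_ccwDist w q]
  have hsin : ∀ u : ℝ, 0 < u → u < 1 → 0 < sin (π * u) := fun u h0 h1 =>
    Real.sin_pos_of_pos_of_lt_pi (by positivity) (by nlinarith [Real.pi_pos])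
  refine crosses_of_orient_neg_of_orient_pos (normSq_pt _) (normSq_pt _) (normSq_pt _)
    (normSq_pt _) ?_ ?_ <;> rw [orient_pt_add]
  · have : sin (π * (ccwDist w p - ccwDist w a)) < 0 := by
      rw [← neg_neg (π * _), Real.sin_neg, neg_lt_zero, ← mul_neg, neg_sub]
      exact hsin _ (by linarith) (by linarith [ccwDist_lt_one w a])
    nlinarith [mul_pos (hsin _ (hp.trans hpa) (ccwDist_lt_one w a)) (hsin _ hp (by linarith))]
  · have := hsin (ccwDist w q - ccwDist w a) (by linarith) (by linarith)
    nlinarith [mul_pos (hsin _ (hp.trans hpa) (ccwDist_lt_one w a)) (hsin _ (by linarith) hq)]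

lemma card_le_of_fract_eq {ι : Type*} {s : Finset ι} {g : ι → ℝ} {c : ℝ} {a b : ℤ}
    (hinj : Set.InjOn g s) (hfract : ∀ i ∈ s, Int.fract (g i) = c)
    (hfloor : ∀ i ∈ s, ⌊g i⌋ ∈ Finset.Icc a b) : s.card ≤ (b + 1 - a).toNat := by
  rw [← Int.card_Icc]
  refine Finset.card_le_card_of_injOn (fun i => ⌊g i⌋) hfloor fun i hi j hj hij => hinj hi hj ?_
  rw [← Int.floor_add_fract (g i), ← Int.floor_add_fract (g j), hfract i hi, hfract j hj]
  exact congrArg (fun k : ℤ => (k : ℝ) + c) hij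

/-- The count behind `Geolam.ccwDist_sig_le`: if `W i` and `B i` are the positions seen from `w`
of the endpoints of the `d` siblings of a leaf, more of the `B i` than of the `W i` lie in
`[0, T)`. -/
lemma exists_lt_and_notMem_Ioc {d : ℕ} (hd : 0 < d) {T c : ℝ} (hT0 : 0 ≤ T) (hT1 : T < 1)
    (hc : c < Int.fract (d * T)) {W B : Fin d → ℝ} (hW : Injective W) (hB : Injective B)
    (hB1 : ∀ i, B i < 1) (hWfract : ∀ i, Int.fract (d * W i) = 0)
    (hBfract : ∀ i, Int.fract (d * B i) = c) : ∃ i, B i < T ∧ W i ∉ Ioc 0 T := by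
  have hd' : (0 : ℝ) < d := Nat.cast_pos.2 hd
  have hc0 : 0 ≤ c := hBfract ⟨0, hd⟩ ▸ Int.fract_nonneg _
  set K := ⌊d * T⌋
  have hK0 : 0 ≤ K := Int.floor_nonneg.2 (by positivity)
  have hKd : K < d := Int.floor_lt.2 (by push_cast; nlinarith)
  have hdT : (d : ℝ) * T = K + Int.fract (d * T) := (Int.floor_add_fract _).symm
  set A := Finset.univ.filter fun i => B i < T
  set N := Finset.univ.filter fun i => W i ∈ Ioc 0 T
  have hN : N.card ≤ (K + 1 - 1).toNat := by
    refine card_le_of_fract_eq (g := fun i => d * W i)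
      ((mul_right_injective₀ hd'.ne').comp hW).injOn (fun i _ => hWfract i) fun i hi => ?_
    obtain ⟨hWi0, hWiT⟩ := (Finset.mem_filter.1 hi).2
    have hWi : W i < T := hWiT.lt_of_ne fun h => by
      have := hWfract i
      rw [h] at this
      linarith
    have hfloor : (d : ℝ) * W i = ⌊d * W i⌋ := by
      linarith [Int.floor_add_fract ((d : ℝ) * W i), hWfract i]
    have hpos : (0 : ℝ) < ⌊d * W i⌋ := hfloor ▸ mul_pos hd' hWi0
    rw [Finset.mem_Icc]
    exact ⟨by exact_mod_cast hpos, Int.floor_le_floor (by nlinarith)⟩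
  have hA : (Finset.univ.filter fun i => ¬ B i < T).card ≤
      ((d - 1 : ℤ) + 1 - (K + 1)).toNat := by
    refine card_le_of_fract_eq (g := fun i => d * B i)
      ((mul_right_injective₀ hd'.ne').comp hB).injOn (fun i _ => hBfract i) fun i hi => ?_
    have hBi : T ≤ B i := not_lt.1 (Finset.mem_filter.1 hi).2
    have hfloor : (d : ℝ) * B i = ⌊d * B i⌋ + c := by
      linarith [Int.floor_add_fract ((d : ℝ) * B i), hBfract i]
    have hK : (K : ℝ) < ⌊d * B i⌋ := by nlinarith
    have hlt : ⌊(d : ℝ) * B i⌋ < d := Int.floor_lt.2 (by push_cast; nlinarith [hB1 i])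
    rw [Finset.mem_Icc]
    constructor <;> [exact_mod_cast hK; omega]
  have hAN : ¬ A ⊆ N := fun h => by
    have := Finset.card_le_card h
    have : A.card + (Finset.univ.filter fun i => ¬ B i < T).card = d := by
      simpa using Finset.card_filter_add_card_filter_not (s := Finset.univ) fun i => B i < T
    omega
  obtain ⟨i, hiA, hiN⟩ := Finset.not_subset.1 hAN
  exact ⟨i, (Finset.mem_filter.1 hiA).2,
    fun h => hiN (Finset.mem_filter.2 ⟨Finset.mem_univ _, h⟩)⟩

lemma ccwDist_sig (d : ℕ) (w x : S1) :
    ccwDist (sig d w) (sig d x) = Int.fract (d * ccwDist w x) :=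
  ccwDist_nsmul d w x

lemma injective_fst_snd_of_disjoint_chord {ι : Type*} {f : ι → S1 × S1}
    (h : ∀ i j, i ≠ j → Disjoint (chord (f i).1 (f i).2) (chord (f j).1 (f j).2)) :
    Injective (fun i => (f i).1) ∧ Injective (fun i => (f i).2) := by
  refine ⟨fun i j hij => ?_, fun i j hij => ?_⟩ <;> by_contra hne
  · exact Set.disjoint_left.1 (h i j hne) (pt_mem_chord_iff.2 (.inl rfl))
      (pt_mem_chord_iff.2 (.inl hij))
  · exact Set.disjoint_left.1 (h i j hne) (pt_mem_chord_iff.2 (.inr rfl))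
      (pt_mem_chord_iff.2 (.inr hij))

lemma Geolam.ccwDist_sig_le {d : ℕ} (L : Geolam d) {w a b : S1} (ha : (w, a) ∈ L.leaves)
    (hb : (w, b) ∈ L.leaves) (hwb : sig d w ≠ sig d b)
    (hab : ccwDist w a < ccwDist w b) :
    ccwDist (sig d w) (sig d a) ≤ ccwDist (sig d w) (sig d b) := by
  by_contra! hlt
  obtain ⟨f, ⟨i₀, hi₀⟩, hfL, hfsig, hdisj⟩ := L.sibling (w, b) hb hwb
  obtain ⟨hfst, hsnd⟩ := injective_fst_snd_of_disjoint_chord hdisj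
  rw [ccwDist_sig, ccwDist_sig] at hlt
  obtain ⟨i, hBi, hWi⟩ := exists_lt_and_notMem_Ioc i₀.pos (ccwDist_nonneg w a)
    (ccwDist_lt_one w a) hlt ((ccwDist_injective w).comp hfst)
    ((ccwDist_injective w).comp hsnd) (fun i => ccwDist_lt_one w _)
    (fun i => by rw [comp_apply, ← ccwDist_sig, (hfsig i).1, ccwDist_self])
    (fun i => by rw [comp_apply, ← ccwDist_sig, (hfsig i).2, ccwDist_sig])
  simp only [comp_apply, Set.mem_Ioc, not_and_or, not_lt] at hBi hWi
  rcases hWi with hW0 | hTW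
  · have hw : (f i).1 = w := by
      by_contra h
      exact (ccwDist_pos_iff.2 h).not_ge hW0
    obtain rfl | hi := eq_or_ne i i₀
    · rw [hi₀] at hBi
      exact lt_asymm hab hBi
    · have hwi : pt w ∈ chord (f i).1 (f i).2 := pt_mem_chord_iff.2 (.inl hw.symm)
      have hwi₀ : pt w ∈ chord (f i₀).1 (f i₀).2 :=
        pt_mem_chord_iff.2 (.inl (by rw [hi₀]))
      exact Set.disjoint_left.1 (hdisj i i₀ hi) hwi hwi₀
  · have hB0 : 0 < ccwDist w (f i).2 := ccwDist_pos_iff.2 fun h => hwb (h ▸ (hfsig i).2)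
    rcases L.unlinked (w, a) ha (f i) (hfL i) with heq | hncross
    · have hmem : pt (f i).2 ∈ chord w a := heq ▸ right_mem_segment ℝ _ _
      rcases pt_mem_chord_iff.1 hmem with h | h <;> rw [h] at hB0 hBi
      exacts [lt_irrefl _ (ccwDist_self w ▸ hB0), lt_irrefl _ hBi]
    · exact hncross (crosses_chord_of_ccwDist hB0 hBi (lt_of_not_ge hTW))

lemma Geolam.iterate_mem_s6 {d : ℕ} (L : Geolam d) (k : ℕ) {x y : S1} (h : (x, y) ∈ L.leaves) :
    ((sig d)^[k] x, (sig d)^[k] y) ∈ L.leaves := by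
  induction k with
  | zero => exact h
  | succ k ih =>
    rw [iterate_succ_apply', iterate_succ_apply']
    exact L.fwd _ ih

lemma Geolam.ccwDist_iterate_lt {d : ℕ} (L : Geolam d) {w y z : S1} (hy : (w, y) ∈ L.leaves)
    (hz : (w, z) ∈ L.leaves) (hyz : ccwDist w y < ccwDist w z) (k : ℕ) :
    (sig d)^[k] z = (sig d)^[k] w ∨ (sig d)^[k] y = (sig d)^[k] z ∨
      ccwDist ((sig d)^[k] w) ((sig d)^[k] y) < ccwDist ((sig d)^[k] w) ((sig d)^[k] z) := by
  induction k with
  | zero => exact .inr (.inr hyz)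
  | succ k ih =>
    simp only [iterate_succ_apply']
    rcases ih with h | h | h
    · exact .inl (congrArg (sig d) h)
    · exact .inr (.inl (congrArg (sig d) h))
    · by_cases hzw : sig d ((sig d)^[k] z) = sig d ((sig d)^[k] w)
      · exact .inl hzw
      by_cases hyz' : sig d ((sig d)^[k] y) = sig d ((sig d)^[k] z)
      · exact .inr (.inl hyz')
      refine .inr (.inr (lt_of_le_of_ne ?_ fun h' => hyz' (ccwDist_injective _ h')))
      exact L.ccwDist_sig_le (L.iterate_mem_s6 k hy) (L.iterate_mem_s6 k hz) (Ne.symm hzw) h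

/-- Near the limit the steps `δ j = ρ (j + 1) - ρ j` satisfy `δ (j + 1) = m δ j` exactly, so
they cannot tend to `0` unless one of them vanishes. -/
lemma exists_succ_eq_of_tendsto_of_fract_mul {m : ℕ} {ρ : ℕ → ℝ} {l : ℝ}
    (hρ : ∀ j, ρ (j + 1) = Int.fract (m * ρ j)) (hl : Tendsto ρ atTop (𝓝 l)) :
    ∃ j, ρ (j + 1) = ρ j := by
  by_contra! hne
  set δ : ℕ → ℝ := fun j => ρ (j + 1) - ρ j
  have hδ : Tendsto δ atTop (𝓝 0) := by
    simpa using (hl.comp (tendsto_add_atTop_nat 1)).sub hl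
  have hstep : ∀ j, ρ (j + 1) - m * ρ j = -⌊m * ρ j⌋ := fun j => by
    rw [hρ j, Int.fract]
    ring
  obtain ⟨N, hN⟩ := Metric.tendsto_atTop.1 hδ (1 / (m + 1)) (by positivity)
  have hlin : ∀ j ≥ N, δ (j + 1) = m * δ j := by
    intro j hj
    have h₁ := hN j hj
    have h₂ := hN (j + 1) (by omega)
    rw [Real.dist_0_eq_abs] at h₁ h₂
    have hint : δ (j + 1) - m * δ j = ((⌊m * ρ j⌋ - ⌊m * ρ (j + 1)⌋ : ℤ) : ℝ) := by
      push_cast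
      linarith [hstep j, hstep (j + 1)]
    have hsmall : |δ (j + 1) - m * δ j| < 1 := by
      calc |δ (j + 1) - m * δ j| ≤ |δ (j + 1)| + m * |δ j| := by
            simpa [abs_mul] using abs_sub (δ (j + 1)) (m * δ j)
        _ < 1 / (m + 1) + m * (1 / (m + 1)) :=
          add_lt_add_of_lt_of_le h₂ (mul_le_mul_of_nonneg_left h₁.le m.cast_nonneg)
        _ = 1 := by field_simp; ring
    rw [hint, ← Int.cast_abs, ← Int.cast_one, Int.cast_lt, Int.abs_lt_one_iff] at hsmall
    rw [← sub_eq_zero, hint, hsmall, Int.cast_zero]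
  have hgrow : ∀ j ≥ N, |δ N| ≤ |δ j| := by
    refine Nat.le_induction le_rfl fun j hj ih => ?_
    have hm : (1 : ℝ) ≤ m := by
      rcases Nat.eq_zero_or_pos m with h | h
      · exact absurd (by simpa [h, δ, sub_eq_zero] using hlin j hj) (hne (j + 1))
      · exact_mod_cast h
    rw [hlin j hj, abs_mul, Nat.abs_cast]
    nlinarith [abs_nonneg (δ j)]
  have hδN : |δ N| ≤ |0| := ge_of_tendsto hδ.abs (eventually_atTop.2 ⟨N, hgrow⟩)
  exact hne N (sub_eq_zero.1 (abs_nonpos_iff.1 (by simpa using hδN)))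

lemma exists_tendsto_of_lt_succ_iff {ρ : ℕ → ℝ} (hbdd : BddAbove (range ρ))
    (hbdd' : BddBelow (range ρ)) (hρ : ∀ j, ρ j < ρ (j + 1) ↔ ρ (j + 1) < ρ (j + 2)) :
    ∃ l, Tendsto ρ atTop (𝓝 l) := by
  by_cases h₀ : ρ 0 < ρ 1
  · have hlt : ∀ j, ρ j < ρ (j + 1) := fun j => by
      induction j with
      | zero => exact h₀
      | succ j ih => exact (hρ j).1 ih
    exact ⟨_, tendsto_atTop_ciSup (monotone_nat_of_le_succ fun j => (hlt j).le) hbdd⟩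
  · have hle : ∀ j, ρ (j + 1) ≤ ρ j := fun j => by
      induction j with
      | zero => exact not_lt.1 h₀
      | succ j ih => exact not_lt.1 fun h => (not_lt.2 ih) ((hρ j).2 h)
    exact ⟨_, tendsto_atTop_ciInf (antitone_nat_of_succ_le hle) hbdd'⟩

lemma Geolam.exists_iterate_eq_or_isFixedPt {d n : ℕ} (L : Geolam d) {v x : S1}
    (hv : IsFixedPt ((sig d)^[n]) v) (hx : (v, x) ∈ L.leaves) :
    ∃ j, ((sig d)^[n])^[j] x = v ∨ IsFixedPt ((sig d)^[n]) (((sig d)^[n])^[j] x) := by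
  by_contra! hX
  set ρ : ℕ → ℝ := fun j => ccwDist v (((sig d)^[n])^[j] x)
  have hleaf : ∀ j, (v, ((sig d)^[n])^[j] x) ∈ L.leaves := fun j => by
    have := L.iterate_mem_s6 (n * j) hx
    rwa [iterate_mul, iterate_fixed hv] at this
  have hpres : ∀ i j, ρ i < ρ j →
      ((sig d)^[n])^[i + 1] x = ((sig d)^[n])^[j + 1] x ∨ ρ (i + 1) < ρ (j + 1) := by
    intro i j hij
    rcases L.ccwDist_iterate_lt (hleaf i) (hleaf j) hij n with h | h | h
    · rw [hv.eq, ← iterate_succ_apply' ((sig d)^[n])] at h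
      exact absurd h (hX (j + 1)).1
    · exact .inl (by simpa only [iterate_succ_apply'] using h)
    · exact .inr (by simpa only [ρ, iterate_succ_apply', hv.eq] using h)
  have hfixed : ∀ j, ((sig d)^[n])^[j + 1] x ≠ ((sig d)^[n])^[j] x := fun j h =>
    (hX j).2 (by rwa [iterate_succ_apply'] at h)
  have hsucc : ∀ j, ρ (j + 1) ≠ ρ j := fun j h => hfixed j (ccwDist_injective v h)
  have hmono : ∀ j, ρ j < ρ (j + 1) ↔ ρ (j + 1) < ρ (j + 2) := fun j => by
    refine ⟨fun h => (hpres j (j + 1) h).resolve_left fun h' => hfixed (j + 1) h'.symm,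
      fun h => ?_⟩
    by_contra h'
    rcases hpres (j + 1) j ((not_lt.1 h').lt_of_ne (hsucc j)) with h'' | h''
    exacts [hfixed (j + 1) h'', lt_asymm h h'']
  have hfract : ∀ j, ρ (j + 1) = Int.fract ((d ^ n : ℕ) * ρ j) := fun j => by
    rw [← ccwDist_nsmul, ← sig_iterate, ← sig_iterate, hv.eq,
      ← iterate_succ_apply' ((sig d)^[n]) j]
  obtain ⟨l, hl⟩ := exists_tendsto_of_lt_succ_iff
    ⟨1, by rintro _ ⟨j, rfl⟩; exact (ccwDist_lt_one _ _).le⟩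
    ⟨0, by rintro _ ⟨j, rfl⟩; exact ccwDist_nonneg _ _⟩ hmono
  obtain ⟨j, hj⟩ := exists_succ_eq_of_tendsto_of_fract_mul hfract hl
  exact hsucc j hj

lemma finite_setOf_nsmul_eq_self {m : ℕ} (hm : 1 < m) : {x : S1 | m • x = x}.Finite := by
  obtain ⟨k, rfl⟩ : ∃ k, m = k + 1 := ⟨m - 1, by omega⟩
  refine (AddCircle.finite_torsion 1 (Nat.succ_lt_succ_iff.1 hm)).subset fun x hx => ?_
  rwa [mem_ofPred_eq, succ_nsmul, add_eq_right] at hx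

theorem stmt6_general (d n : ℕ) (hd : 2 ≤ d) (hn : 1 ≤ n) (L : Geolam d) (v : S1)
    (hv : (sig d)^[n] v = v) :
    (∀ x : S1, x ≠ v → (v, x) ∈ L.leaves →
      ∃ j : ℕ, (sig d)^[n * j] x = v ∨ (sig d)^[n] ((sig d)^[n * j] x) = (sig d)^[n * j] x) ∧
    {x : S1 | x ≠ v ∧ (v, x) ∈ L.leaves ∧ (sig d)^[n] x = x}.Finite := by
  refine ⟨fun x _ hx => ?_, ?_⟩
  · simpa only [iterate_mul, IsFixedPt] using L.exists_iterate_eq_or_isFixedPt hv hx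
  · have hdn : 1 < d ^ n := Nat.one_lt_pow (by omega) (by omega)
    refine (finite_setOf_nsmul_eq_self hdn).subset fun x hx => ?_
    rw [mem_ofPred_eq, ← sig_iterate]
    exact hx.2.2

/-- in an infinite cone with `σ_d^n`-fixed vertex `v`, every leaf is
(pre)critical or (pre)periodic, and only finitely many leaves `[v,a]` have `σ_d^n a = a`. -/
theorem stmt6 (d n : ℕ) (hd : 2 ≤ d) (hn : 1 ≤ n) (L : Geolam d) (v : S1)
    (hv : (sig d)^[n] v = v)
    (hinf : {x : S1 | x ≠ v ∧ (v, x) ∈ L.leaves}.Infinite) :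
    (∀ x : S1, x ≠ v → (v, x) ∈ L.leaves →
      ∃ j : ℕ, (sig d)^[n * j] x = v ∨ (sig d)^[n] ((sig d)^[n * j] x) = (sig d)^[n * j] x) ∧
    {x : S1 | x ≠ v ∧ (v, x) ∈ L.leaves ∧ (sig d)^[n] x = x}.Finite :=
  stmt6_general d n hd hn L v hv

end
end
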